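/- Let p : Ω → Λ be a covering of k-graphs, let (𝒢(Ω), i_Ω) and (𝒢(Λ), i_Λ) be fundamental groupoids, and let 𝒢(Λ) act on the vertex set Ω⁰ by the corresponding action. Then the map (p_*, s) : 𝒢(Ω) → 𝒢(Λ)*Ω⁰, sending a morphism c of 𝒢(Ω) to the pair (p_*(c), s(c)) in the transformation groupoid, is an isomorphism of groupoids. -/

import Mathlib

/-!
Arrows-only formalization of `k`-graphs (higher-rank graphs), their coverings,
fundamental groupoids, and groupoid actions, following Pask–Quigg–Raeburn,
"Coverings of k-graphs".

A small category is encoded by its set of arrows `A` together with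
source/range maps `src rng : A → A` (whose common image is the set of
identities = vertices) and a (guarded) total composition `comp : A → A → A`,
where `comp f g` is the composite "f after g", meaningful when `src f = rng g`.
A `k`-graph additionally has a degree map `deg : A → (Fin k → ℕ)` which is
functorial and satisfies the unique factorization property.
-/

namespace KGraphCovering

/-- A `k`-graph in arrows-only form. -/
structure KGraphStruct (k : ℕ) (A : Type) : Type where
  src : A → A
  rng : A → A
  comp : A → A → A
  deg : A → (Fin k → ℕ)
  src_src : ∀ f, src (src f) = src f
  rng_src : ∀ f, rng (src f) = src f
  src_rng : ∀ f, src (rng f) = rng f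
  rng_rng : ∀ f, rng (rng f) = rng f
  comp_src_id : ∀ f, comp f (src f) = f
  rng_comp_id : ∀ f, comp (rng f) f = f
  src_comp : ∀ f g, src f = rng g → src (comp f g) = src g
  rng_comp : ∀ f g, src f = rng g → rng (comp f g) = rng f
  assoc : ∀ f g h, src f = rng g → src g = rng h →
    comp (comp f g) h = comp f (comp g h)
  deg_comp : ∀ f g, src f = rng g → deg (comp f g) = deg f + deg g
  deg_src : ∀ f, deg (src f) = 0
  factor : ∀ f m n, deg f = m + n →
    ∃! q : A × A, src q.1 = rng q.2 ∧ deg q.1 = m ∧ deg q.2 = n ∧ comp q.1 q.2 = f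

namespace KGraphStruct

variable {k : ℕ} {A : Type}

/-- The vertices (objects) are the identity arrows. -/
def IsVertex (S : KGraphStruct k A) (v : A) : Prop := S.src v = v

/-- A `k`-graph is connected if the equivalence relation generated by
"there is a morphism from `v` to `u`" relates all pairs of vertices. -/
def Connected (S : KGraphStruct k A) : Prop :=
  ∀ u v, S.IsVertex u → S.IsVertex v →
    Relation.EqvGen (fun a b => ∃ f, S.rng f = a ∧ S.src f = b) u v

end KGraphStruct

/-- A groupoid in arrows-only form. -/
structure GroupoidStruct (B : Type) : Type where
  src : B → B
  rng : B → B
  comp : B → B → B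
  inv : B → B
  src_src : ∀ f, src (src f) = src f
  rng_src : ∀ f, rng (src f) = src f
  src_rng : ∀ f, src (rng f) = rng f
  rng_rng : ∀ f, rng (rng f) = rng f
  comp_src_id : ∀ f, comp f (src f) = f
  rng_comp_id : ∀ f, comp (rng f) f = f
  src_comp : ∀ f g, src f = rng g → src (comp f g) = src g
  rng_comp : ∀ f g, src f = rng g → rng (comp f g) = rng f
  assoc : ∀ f g h, src f = rng g → src g = rng h →
    comp (comp f g) h = comp f (comp g h)
  src_inv : ∀ f, src (inv f) = rng f
  rng_inv : ∀ f, rng (inv f) = src f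
  inv_comp_self : ∀ f, comp (inv f) f = src f
  comp_inv_self : ∀ f, comp f (inv f) = rng f

namespace GroupoidStruct

variable {B : Type}

/-- The vertices (objects) of a groupoid are the identity arrows. -/
def IsVertex (G : GroupoidStruct B) (v : B) : Prop := G.src v = v

/-- A subgroup of the isotropy group `x𝒢x`, as a set of arrows. -/
def IsSubgroupAt (G : GroupoidStruct B) (x : B) (H : Set B) : Prop :=
  (∀ a ∈ H, G.src a = x ∧ G.rng a = x) ∧ x ∈ H ∧
  (∀ a ∈ H, ∀ b ∈ H, G.comp a b ∈ H) ∧ (∀ a ∈ H, G.inv a ∈ H)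

/-- `K` is a conjugate of `H` in the isotropy group at `x`. -/
def ConjAt (G : GroupoidStruct B) (x : B) (H K : Set B) : Prop :=
  ∃ g, G.src g = x ∧ G.rng g = x ∧
    K = (fun a => G.comp (G.comp g a) (G.inv g)) '' H

/-- `H` is a normal subset of the isotropy group at `x`. -/
def IsNormalAt (G : GroupoidStruct B) (x : B) (H : Set B) : Prop :=
  ∀ g, G.src g = x → G.rng g = x → ∀ a ∈ H, G.comp (G.comp g a) (G.inv g) ∈ H

/-- The normalizer of `H` in the isotropy group at `x`. -/
def normalizerAt (G : GroupoidStruct B) (x : B) (H : Set B) : Set B :=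
  {g | G.src g = x ∧ G.rng g = x ∧
    (fun a => G.comp (G.comp g a) (G.inv g)) '' H = H}

end GroupoidStruct

/-- `f` is a morphism of `k`-graphs (a degree-preserving functor). -/
def IsKGraphHomFun {k : ℕ} {A A' : Type} (S : KGraphStruct k A)
    (T : KGraphStruct k A') (f : A → A') : Prop :=
  (∀ a, f (S.src a) = T.src (f a)) ∧
  (∀ a, f (S.rng a) = T.rng (f a)) ∧
  (∀ a b, S.src a = S.rng b → f (S.comp a b) = T.comp (f a) (f b)) ∧
  (∀ a, T.deg (f a) = S.deg a)

/-- `f` is a functor from a `k`-graph to a groupoid. -/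
def IsFunctorToGpdFun {k : ℕ} {A B : Type} (S : KGraphStruct k A)
    (G : GroupoidStruct B) (f : A → B) : Prop :=
  (∀ a, f (S.src a) = G.src (f a)) ∧
  (∀ a, f (S.rng a) = G.rng (f a)) ∧
  (∀ a b, S.src a = S.rng b → f (S.comp a b) = G.comp (f a) (f b))

/-- `f` is a morphism of groupoids (a functor). -/
def IsGpdHomFun {B C : Type} (G : GroupoidStruct B) (H : GroupoidStruct C)
    (f : B → C) : Prop :=
  (∀ a, f (G.src a) = H.src (f a)) ∧
  (∀ a, f (G.rng a) = H.rng (f a)) ∧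
  (∀ a b, G.src a = G.rng b → f (G.comp a b) = H.comp (f a) (f b))

/-- `p : Ω → Λ` is a covering of `k`-graphs: a surjective `k`-graph morphism
which maps `Ωv` bijectively onto `Λp(v)` and `vΩ` bijectively onto `p(v)Λ`
for every vertex `v` of `Ω`. -/
structure IsCovering {k : ℕ} {A A' : Type} (S : KGraphStruct k A')
    (T : KGraphStruct k A) (p : A' → A) : Prop where
  hom : IsKGraphHomFun S T p
  surj : Function.Surjective p
  src_inj : ∀ a b, S.src a = S.src b → p a = p b → a = b
  src_lift : ∀ v, S.IsVertex v → ∀ g, T.src g = p v → ∃ a, S.src a = v ∧ p a = g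
  rng_inj : ∀ a b, S.rng a = S.rng b → p a = p b → a = b
  rng_lift : ∀ v, S.IsVertex v → ∀ g, T.rng g = p v → ∃ a, S.rng a = v ∧ p a = g

/-- A fundamental groupoid of a `k`-graph `S`: a groupoid `G` whose object
set is identified with the vertex set of `S` via the canonical functor `i`
(which is bijective on objects), with the universal property that every
functor from `S` to a groupoid factors uniquely through `i`. -/
structure FundamentalGroupoid {k : ℕ} {A : Type} (S : KGraphStruct k A) :
    Type 1 where
  B : Type
  G : GroupoidStruct B
  i : A → B
  i_hom : IsFunctorToGpdFun S G i
  obj_bij : ∀ w, G.IsVertex w → ∃! v, S.IsVertex v ∧ i v = w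
  univ : ∀ {C : Type} (H : GroupoidStruct C) (F : A → C),
    IsFunctorToGpdFun S H F →
    ∃! F' : B → C, IsGpdHomFun G H F' ∧ ∀ a, F' (i a) = F a

/-- The fundamental group `π(Λ,x)` at a vertex `x`, as the isotropy of the
fundamental groupoid at `i x`. -/
def FundamentalGroupoid.pi1 {k : ℕ} {A : Type} {S : KGraphStruct k A}
    (F : FundamentalGroupoid S) (x : A) : Set F.B :=
  {a | F.G.src a = F.i x ∧ F.G.rng a = F.i x}

/-- An automorphism of the covering `p : Ω → Λ`. -/
def IsCoveringAut {k : ℕ} {A A' : Type} (Ω : KGraphStruct k A')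
    (Λ : KGraphStruct k A) (p : A' → A) (φ : A' → A') : Prop :=
  Function.Bijective φ ∧ IsKGraphHomFun Ω Ω φ ∧ ∀ a, p (φ a) = p a

/-- The action of the fundamental groupoid `F = 𝒢(Λ)` on the vertex set of a
covering `p : Ω → Λ`, determined by `i(p(λ)) ⬝ s(λ) = r(λ)`.  The fiber of a
vertex `w` of `Ω` is over the object `F.i (p w)`. -/
structure CorrespondingAction {k : ℕ} {A A' : Type} (Ω : KGraphStruct k A')
    (Λ : KGraphStruct k A) (F : FundamentalGroupoid Λ) (p : A' → A)
    (act : F.B → A' → A') : Prop where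
  act_vertex : ∀ a w, Ω.IsVertex w → F.G.src a = F.i (p w) →
    Ω.IsVertex (act a w) ∧ F.i (p (act a w)) = F.G.rng a
  act_id : ∀ w, Ω.IsVertex w → act (F.i (p w)) w = w
  act_comp : ∀ a b w, Ω.IsVertex w → F.G.src b = F.i (p w) →
    F.G.src a = F.G.rng b → act (F.G.comp a b) w = act a (act b w)
  act_cov : ∀ lam, act (F.i (p lam)) (Ω.src lam) = Ω.rng lam

/-- An action of a groupoid `G` on a set `V`, presented by an anchor map
`fib : V → B` (landing in vertices) and a guarded action map. -/
structure GpdActionStruct {B : Type} (G : GroupoidStruct B) (V : Type) :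
    Type where
  fib : V → B
  act : B → V → V
  fib_vertex : ∀ v, G.src (fib v) = fib v
  act_fib : ∀ a v, G.src a = fib v → fib (act a v) = G.rng a
  act_id : ∀ v, act (fib v) v = v
  act_comp : ∀ a b v, G.src b = fib v → G.src a = G.rng b →
    act (G.comp a b) v = act a (act b v)

namespace GpdActionStruct

variable {B V W : Type} {G : GroupoidStruct B}

/-- Transitivity of a groupoid action. -/
def Transitive (ρ : GpdActionStruct G V) : Prop :=
  ∀ u v : V, ∃ a, G.src a = ρ.fib v ∧ ρ.act a v = u

/-- The stability group of the action at `v`. -/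
def stab (ρ : GpdActionStruct G V) (v : V) : Set B :=
  {a | G.src a = ρ.fib v ∧ G.rng a = ρ.fib v ∧ ρ.act a v = v}

/-- Freeness of a groupoid action: all stability groups are trivial. -/
def Free (ρ : GpdActionStruct G V) : Prop :=
  ∀ (v : V) (a : B), a ∈ ρ.stab v → a = ρ.fib v

end GpdActionStruct

/-- A morphism of actions of the groupoid `G`: a fiber-preserving
equivariant map. -/
def IsActionHom {B V W : Type} {G : GroupoidStruct B}
    (ρ : GpdActionStruct G V) (σ : GpdActionStruct G W) (φ : V → W) : Prop :=
  (∀ v, σ.fib (φ v) = ρ.fib v) ∧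
  ∀ a v, G.src a = ρ.fib v → φ (ρ.act a v) = σ.act a (φ v)

/-- An automorphism of an action of the groupoid `G`. -/
def IsActionAut {B V : Type} {G : GroupoidStruct B}
    (ρ : GpdActionStruct G V) (φ : V → V) : Prop :=
  Function.Bijective φ ∧ IsActionHom ρ ρ φ

/-- A universal covering: a connected covering admitting a morphism of
coverings to every connected covering of the base. -/
def IsUniversalCovering {k : ℕ} {A A' : Type} (Ω : KGraphStruct k A')
    (Λ : KGraphStruct k A) (p : A' → A) : Prop :=
  IsCovering Ω Λ p ∧ Ω.Connected ∧
  ∀ (A'' : Type) (Sg : KGraphStruct k A'') (q : A'' → A),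
    IsCovering Sg Λ q → Sg.Connected →
    ∃ φ : A' → A'', IsKGraphHomFun Ω Sg φ ∧ ∀ a, q (φ a) = p a

end KGraphCovering

/-!
The universal property of `𝒢(Ω)`, applied to the functor `λ ↦ (i(p λ), s λ)` into `𝒢(Λ)*Ω⁰`,
gives a functor `Φ`; its first component is `p_*` by uniqueness. For an inverse, apply
the universal property of `𝒢(Λ)` to the groupoid of pairs `(a, f)` in which `f` chooses, for
every vertex `w` over `s(a)`, an arrow of `𝒢(Ω)` from `w` to `a w` lying over `a`; unique
lifting of arrows of `Λ` along the covering yields `μ ↦ (i μ, lifts of μ)`. Evaluating at `w`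
gives `Ψ (a, w)`; `Ψ ∘ Φ = id` by uniqueness once more, and `Φ ∘ Ψ = id` because `Ψ (a, w)`
lies over `a` and starts at `w`.
-/

namespace KGraphCovering

theorem GroupoidStruct.inv_eq_of_comp_eq {B : Type} (G : GroupoidStruct B) {c u : B}
    (h₁ : G.src c = G.rng u) (h₂ : G.comp c u = G.rng c) : G.inv c = u := by
  have hu : u = G.comp (G.src c) u := by rw [h₁, G.rng_comp_id]
  rw [hu, ← G.inv_comp_self c, G.assoc _ _ _ (G.src_inv c) h₁, h₂, ← G.src_inv c,
    G.comp_src_id]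

section GroupoidHom

variable {B C D : Type} {G : GroupoidStruct B} {H : GroupoidStruct C} {K : GroupoidStruct D}

theorem IsGpdHomFun.map_src_eq_rng {F : B → C} (hF : IsGpdHomFun G H F) {a b : B}
    (h : G.src a = G.rng b) : H.src (F a) = H.rng (F b) := by
  rw [← hF.1, ← hF.2.1, h]

theorem IsGpdHomFun.map_inv {F : B → C} (hF : IsGpdHomFun G H F) (c : B) :
    F (G.inv c) = H.inv (F c) :=
  (H.inv_eq_of_comp_eq (hF.map_src_eq_rng (G.rng_inv c).symm)
    (by rw [← hF.2.2 c _ (G.rng_inv c).symm, G.comp_inv_self, hF.2.1])).symm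

theorem IsGpdHomFun.comp {F₁ : C → D} {F₂ : B → C} (h₁ : IsGpdHomFun H K F₁)
    (h₂ : IsGpdHomFun G H F₂) : IsGpdHomFun G K (F₁ ∘ F₂) :=
  ⟨fun a => by simp only [Function.comp_apply, h₂.1, h₁.1],
    fun a => by simp only [Function.comp_apply, h₂.2.1, h₁.2.1],
    fun a b h => by
      simp only [Function.comp_apply, h₂.2.2 a b h, h₁.2.2 _ _ (h₂.map_src_eq_rng h)]⟩

theorem isGpdHomFun_id (G : GroupoidStruct B) : IsGpdHomFun G G id :=
  ⟨fun _ => rfl, fun _ => rfl, fun _ _ _ => rfl⟩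

theorem IsGpdHomFun.comp_isFunctorToGpdFun {k : ℕ} {A : Type} {S : KGraphStruct k A}
    {F : B → C} {f : A → B} (hF : IsGpdHomFun G H F) (hf : IsFunctorToGpdFun S G f) :
    IsFunctorToGpdFun S H (F ∘ f) :=
  ⟨fun a => by simp only [Function.comp_apply, hf.1, hF.1],
    fun a => by simp only [Function.comp_apply, hf.2.1, hF.2.1],
    fun a b h => by
      simp only [Function.comp_apply, hf.2.2 a b h]
      exact hF.2.2 _ _ (by rw [← hf.1, ← hf.2.1, h])⟩

end GroupoidHom

namespace FundamentalGroupoid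

variable {k : ℕ} {A : Type} {S : KGraphStruct k A} (F : FundamentalGroupoid S)

theorem hom_ext {C : Type} {H : GroupoidStruct C} {F₁ F₂ : F.B → C}
    (h₁ : IsGpdHomFun F.G H F₁) (h₂ : IsGpdHomFun F.G H F₂) (h : ∀ a, F₁ (F.i a) = F₂ (F.i a)) :
    F₁ = F₂ :=
  (F.univ H (F₂ ∘ F.i) (h₂.comp_isFunctorToGpdFun F.i_hom)).unique ⟨h₁, h⟩ ⟨h₂, fun _ => rfl⟩

theorem eq_self_of_isGpdHomFun {E : F.B → F.B} (hE : IsGpdHomFun F.G F.G E)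
    (h : ∀ a, E (F.i a) = F.i a) (b : F.B) : E b = b :=
  congrFun (F.hom_ext hE (isGpdHomFun_id F.G) h) b

theorem src_i_of_isVertex {w : A} (hw : S.IsVertex w) : F.G.src (F.i w) = F.i w := by
  rw [← F.i_hom.1 w, hw]

theorem i_injOn_vertices {v v' : A} (hv : S.IsVertex v) (hv' : S.IsVertex v')
    (h : F.i v = F.i v') : v = v' :=
  (F.obj_bij (F.i v) (F.src_i_of_isVertex hv)).unique ⟨hv, rfl⟩ ⟨hv', h.symm⟩

end FundamentalGroupoid

theorem IsKGraphHomFun.isVertex_map {k : ℕ} {A A' : Type} {S : KGraphStruct k A'}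
    {T : KGraphStruct k A} {f : A' → A} (hf : IsKGraphHomFun S T f) {w : A'}
    (hw : S.IsVertex w) : T.IsVertex (f w) := by
  have h := hf.1 w
  rw [hw] at h
  exact h.symm

section Covering

variable {k : ℕ} {A A' : Type} {Λ : KGraphStruct k A} {Ω : KGraphStruct k A'}
  {FΛ : FundamentalGroupoid Λ} {FΩ : FundamentalGroupoid Ω} {p : A' → A}
  {pst : FΩ.B → FΛ.B} {act : FΛ.B → A' → A'}

namespace CorrespondingAction

variable {a : FΛ.B} {w : A'}

theorem isVertex_act (hact : CorrespondingAction Ω Λ FΛ p act) (hw : Ω.IsVertex w)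
    (ha : FΛ.G.src a = FΛ.i (p w)) :
    Ω.IsVertex (act a w) :=
  (hact.act_vertex a w hw ha).1

theorem i_p_act (hact : CorrespondingAction Ω Λ FΛ p act) (hw : Ω.IsVertex w)
    (ha : FΛ.G.src a = FΛ.i (p w)) :
    FΛ.i (p (act a w)) = FΛ.G.rng a :=
  (hact.act_vertex a w hw ha).2

theorem act_eq_self (hact : CorrespondingAction Ω Λ FΛ p act) (hw : Ω.IsVertex w)
    (ha : a = FΛ.i (p w)) : act a w = w :=
  ha ▸ hact.act_id w hw

theorem act_inv_act (hact : CorrespondingAction Ω Λ FΛ p act) (hw : Ω.IsVertex w)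
    (ha : FΛ.G.src a = FΛ.i (p w)) :
    act (FΛ.G.inv a) (act a w) = w := by
  rw [← hact.act_comp _ _ w hw ha (FΛ.G.src_inv a), FΛ.G.inv_comp_self,
    hact.act_eq_self hw ha]

theorem act_act_inv (hact : CorrespondingAction Ω Λ FΛ p act) (hw : Ω.IsVertex w)
    (ha : FΛ.G.rng a = FΛ.i (p w)) :
    act a (act (FΛ.G.inv a) w) = w := by
  rw [← hact.act_comp _ _ w hw ((FΛ.G.src_inv a).trans ha) (FΛ.G.rng_inv a).symm,
    FΛ.G.comp_inv_self, hact.act_eq_self hw ha]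

end CorrespondingAction

section Transformation

abbrev ActionArrow (Ω : KGraphStruct k A') (FΛ : FundamentalGroupoid Λ) (p : A' → A) : Type :=
  {q : FΛ.B × A' // Ω.IsVertex q.2 ∧ FΛ.G.src q.1 = FΛ.i (p q.2)}

theorem ActionArrow.ext {x y : ActionArrow Ω FΛ p} (h₁ : x.1.1 = y.1.1) (h₂ : x.1.2 = y.1.2) :
    x = y :=
  Subtype.ext (Prod.ext h₁ h₂)

open Classical in
noncomputable def transformationGroupoid (hact : CorrespondingAction Ω Λ FΛ p act) :
    GroupoidStruct (ActionArrow Ω FΛ p) where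
  src t := ⟨(FΛ.G.src t.1.1, t.1.2), t.2.1, by rw [FΛ.G.src_src]; exact t.2.2⟩
  rng t := ⟨(FΛ.G.rng t.1.1, act t.1.1 t.1.2), hact.isVertex_act t.2.1 t.2.2,
    by rw [FΛ.G.src_rng, hact.i_p_act t.2.1 t.2.2]⟩
  comp x y :=
    if h : FΛ.G.src x.1.1 = FΛ.G.rng y.1.1 then
      ⟨(FΛ.G.comp x.1.1 y.1.1, y.1.2), y.2.1, by rw [FΛ.G.src_comp _ _ h]; exact y.2.2⟩
    else x
  inv t := ⟨(FΛ.G.inv t.1.1, act t.1.1 t.1.2), hact.isVertex_act t.2.1 t.2.2,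
    by rw [FΛ.G.src_inv, hact.i_p_act t.2.1 t.2.2]⟩
  src_src _ := ActionArrow.ext (FΛ.G.src_src _) rfl
  rng_src t := ActionArrow.ext (FΛ.G.rng_src _) (hact.act_eq_self t.2.1 t.2.2)
  src_rng _ := ActionArrow.ext (FΛ.G.src_rng _) rfl
  rng_rng t := ActionArrow.ext (FΛ.G.rng_rng _)
    (hact.act_eq_self (hact.isVertex_act t.2.1 t.2.2) (hact.i_p_act t.2.1 t.2.2).symm)
  comp_src_id t := by
    dsimp only
    rw [dif_pos (FΛ.G.rng_src _).symm]
    exact ActionArrow.ext (FΛ.G.comp_src_id _) rfl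
  rng_comp_id t := by
    dsimp only
    rw [dif_pos (FΛ.G.src_rng _)]
    exact ActionArrow.ext (FΛ.G.rng_comp_id _) rfl
  src_comp x y h := by
    have hab : FΛ.G.src x.1.1 = FΛ.G.rng y.1.1 := congrArg (·.1.1) h
    rw [dif_pos hab]
    exact ActionArrow.ext (FΛ.G.src_comp _ _ hab) rfl
  rng_comp x y h := by
    have hab : FΛ.G.src x.1.1 = FΛ.G.rng y.1.1 := congrArg (·.1.1) h
    have hw : x.1.2 = act y.1.1 y.1.2 := congrArg (·.1.2) h
    rw [dif_pos hab]
    exact ActionArrow.ext (FΛ.G.rng_comp _ _ hab)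
      ((hact.act_comp _ _ _ y.2.1 y.2.2 hab).trans (congrArg _ hw.symm))
  assoc x y z hxy hyz := by
    have hab : FΛ.G.src x.1.1 = FΛ.G.rng y.1.1 := congrArg (·.1.1) hxy
    have hbc : FΛ.G.src y.1.1 = FΛ.G.rng z.1.1 := congrArg (·.1.1) hyz
    rw [dif_pos hab, dif_pos hbc]
    dsimp only
    rw [dif_pos (by rw [FΛ.G.src_comp _ _ hab, hbc]),
      dif_pos (by rw [FΛ.G.rng_comp _ _ hbc, hab])]
    exact ActionArrow.ext (FΛ.G.assoc _ _ _ hab hbc) rfl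
  src_inv _ := ActionArrow.ext (FΛ.G.src_inv _) rfl
  rng_inv t := ActionArrow.ext (FΛ.G.rng_inv _) (hact.act_inv_act t.2.1 t.2.2)
  inv_comp_self t := by
    dsimp only
    rw [dif_pos (FΛ.G.src_inv _)]
    exact ActionArrow.ext (FΛ.G.inv_comp_self _) rfl
  comp_inv_self t := by
    dsimp only
    rw [dif_pos (FΛ.G.rng_inv _).symm]
    exact ActionArrow.ext (FΛ.G.comp_inv_self _) rfl

theorem transformationGroupoid_comp_val (hact : CorrespondingAction Ω Λ FΛ p act)
    {x y : ActionArrow Ω FΛ p} (h : FΛ.G.src x.1.1 = FΛ.G.rng y.1.1) :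
    ((transformationGroupoid hact).comp x y).1 = (FΛ.G.comp x.1.1 y.1.1, y.1.2) := by
  simp only [transformationGroupoid, dif_pos h]

theorem isGpdHomFun_transformationGroupoid_fst (hact : CorrespondingAction Ω Λ FΛ p act) :
    IsGpdHomFun (transformationGroupoid hact) FΛ.G (fun t => t.1.1) :=
  ⟨fun _ => rfl, fun _ => rfl, fun _ _ h => by
    simp only [transformationGroupoid_comp_val hact (congrArg (·.1.1) h)]⟩

def coveringFunctor (FΛ : FundamentalGroupoid Λ) (hp : IsKGraphHomFun Ω Λ p) (lam : A') :
    ActionArrow Ω FΛ p :=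
  ⟨(FΛ.i (p lam), Ω.src lam), Ω.src_src lam, by rw [← FΛ.i_hom.1, hp.1]⟩

theorem isFunctorToGpdFun_coveringFunctor (hp : IsKGraphHomFun Ω Λ p)
    (hact : CorrespondingAction Ω Λ FΛ p act) :
    IsFunctorToGpdFun Ω (transformationGroupoid hact) (coveringFunctor FΛ hp) := by
  refine ⟨fun lam => ?_, fun lam => ?_, fun lam mu h => ?_⟩
  · exact ActionArrow.ext ((congrArg FΛ.i (hp.1 lam)).trans (FΛ.i_hom.1 _)) (Ω.src_src lam)
  · exact ActionArrow.ext ((congrArg FΛ.i (hp.2.1 lam)).trans (FΛ.i_hom.2.1 _))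
      ((Ω.src_rng lam).trans (hact.act_cov lam).symm)
  · have hpg : Λ.src (p lam) = Λ.rng (p mu) := by rw [← hp.1, ← hp.2.1, h]
    have hg : FΛ.G.src (FΛ.i (p lam)) = FΛ.G.rng (FΛ.i (p mu)) := by
      rw [← FΛ.i_hom.1, ← FΛ.i_hom.2.1, hpg]
    refine ActionArrow.ext ?_ ?_ <;> rw [transformationGroupoid_comp_val hact hg]
    · exact (congrArg FΛ.i (hp.2.2.1 lam mu h)).trans (FΛ.i_hom.2.2 _ _ hpg)
    · exact Ω.src_comp _ _ h

theorem snd_eq_of_isGpdHomFun (hp : IsKGraphHomFun Ω Λ p)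
    (hact : CorrespondingAction Ω Λ FΛ p act) {Φ : FΩ.B → ActionArrow Ω FΛ p}
    (hΦ : IsGpdHomFun FΩ.G (transformationGroupoid hact) Φ)
    (hΦi : ∀ lam, Φ (FΩ.i lam) = coveringFunctor FΛ hp lam) (c : FΩ.B) (w : A')
    (hw : Ω.IsVertex w) (hc : FΩ.i w = FΩ.G.src c) : (Φ c).1.2 = w :=
  calc (Φ c).1.2 = (Φ (FΩ.G.src c)).1.2 := by rw [hΦ.1]; rfl
    _ = w := by rw [← hc, hΦi]; exact hw

end Transformation

section Lifts

def IsLiftAt (pst : FΩ.B → FΛ.B) (act : FΛ.B → A' → A') (a : FΛ.B) (w : A') (c : FΩ.B) :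
    Prop :=
  FΩ.G.src c = FΩ.i w ∧ pst c = a ∧ FΩ.G.rng c = FΩ.i (act a w)

theorem isLiftAt_i (hpsti : ∀ a, pst (FΩ.i a) = FΛ.i (p a))
    (hact : CorrespondingAction Ω Λ FΛ p act) (lam : A') :
    IsLiftAt pst act (FΛ.i (p lam)) (Ω.src lam) (FΩ.i lam) :=
  ⟨(FΩ.i_hom.1 lam).symm, hpsti lam, by rw [← FΩ.i_hom.2.1, hact.act_cov]⟩

theorem IsLiftAt.comp (hpst : IsGpdHomFun FΩ.G FΛ.G pst)
    (hact : CorrespondingAction Ω Λ FΛ p act) {a b : FΛ.B} {w : A'} {c d : FΩ.B}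
    (hw : Ω.IsVertex w) (hb : FΛ.G.src b = FΛ.i (p w)) (hab : FΛ.G.src a = FΛ.G.rng b)
    (hc : IsLiftAt pst act a (act b w) c) (hd : IsLiftAt pst act b w d) :
    IsLiftAt pst act (FΛ.G.comp a b) w (FΩ.G.comp c d) := by
  have hcd : FΩ.G.src c = FΩ.G.rng d := hc.1.trans hd.2.2.symm
  refine ⟨by rw [FΩ.G.src_comp _ _ hcd, hd.1], by rw [hpst.2.2 _ _ hcd, hc.2.1, hd.2.1], ?_⟩
  rw [FΩ.G.rng_comp _ _ hcd, hc.2.2, hact.act_comp a b w hw hb hab]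

theorem IsLiftAt.inv (hpst : IsGpdHomFun FΩ.G FΛ.G pst)
    (hact : CorrespondingAction Ω Λ FΛ p act) {a : FΛ.B} {w : A'} {c : FΩ.B}
    (hw : Ω.IsVertex w) (ha : FΛ.G.src a = FΛ.i (p w)) (hc : IsLiftAt pst act a w c) :
    IsLiftAt pst act (FΛ.G.inv a) (act a w) (FΩ.G.inv c) :=
  ⟨by rw [FΩ.G.src_inv, hc.2.2], by rw [hpst.map_inv, hc.2.1],
    by rw [FΩ.G.rng_inv, hc.1, hact.act_inv_act hw ha]⟩

/-- Off the fibre over `s(a)` the family is pinned to `FΩ.i`, so that it is determined by its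
values on the fibre. -/
structure IsLiftFamily (p : A' → A) (pst : FΩ.B → FΛ.B) (act : FΛ.B → A' → A') (a : FΛ.B)
    (f : A' → FΩ.B) : Prop where
  isLiftAt : ∀ w, Ω.IsVertex w → FΛ.G.src a = FΛ.i (p w) → IsLiftAt pst act a w (f w)
  eq_i_of_not : ∀ w, ¬ (Ω.IsVertex w ∧ FΛ.G.src a = FΛ.i (p w)) → f w = FΩ.i w

theorem isLiftFamily_i (hpsti : ∀ a, pst (FΩ.i a) = FΛ.i (p a))
    (hact : CorrespondingAction Ω Λ FΛ p act) {x : FΛ.B} (hx : FΛ.G.src x = x) :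
    IsLiftFamily p pst act x FΩ.i where
  isLiftAt w hw hs := by
    have h := isLiftAt_i hpsti hact w
    rwa [hw, ← hs, hx] at h
  eq_i_of_not _ _ := rfl

open Classical in
noncomputable def liftComp (p : A' → A) (act : FΛ.B → A' → A') (b : FΛ.B)
    (f g : A' → FΩ.B) : A' → FΩ.B := fun w =>
  if Ω.IsVertex w ∧ FΛ.G.src b = FΛ.i (p w) then FΩ.G.comp (f (act b w)) (g w) else FΩ.i w

open Classical in
noncomputable def liftInv (p : A' → A) (act : FΛ.B → A' → A') (a : FΛ.B) (f : A' → FΩ.B) :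
    A' → FΩ.B := fun w =>
  if Ω.IsVertex w ∧ FΛ.G.src (FΛ.G.inv a) = FΛ.i (p w) then
    FΩ.G.inv (f (act (FΛ.G.inv a) w))
  else FΩ.i w

theorem liftComp_of {b : FΛ.B} {f g : A' → FΩ.B} {w : A'} (hw : Ω.IsVertex w)
    (hb : FΛ.G.src b = FΛ.i (p w)) :
    liftComp p act b f g w = FΩ.G.comp (f (act b w)) (g w) :=
  if_pos ⟨hw, hb⟩

theorem liftInv_of {a : FΛ.B} {f : A' → FΩ.B} {w : A'} (hw : Ω.IsVertex w)
    (ha : FΛ.G.src (FΛ.G.inv a) = FΛ.i (p w)) :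
    liftInv p act a f w = FΩ.G.inv (f (act (FΛ.G.inv a) w)) :=
  if_pos ⟨hw, ha⟩

theorem IsLiftFamily.comp (hpst : IsGpdHomFun FΩ.G FΛ.G pst)
    (hact : CorrespondingAction Ω Λ FΛ p act) {a b : FΛ.B} {f g : A' → FΩ.B}
    (hab : FΛ.G.src a = FΛ.G.rng b) (hf : IsLiftFamily p pst act a f)
    (hg : IsLiftFamily p pst act b g) :
    IsLiftFamily p pst act (FΛ.G.comp a b) (liftComp p act b f g) where
  isLiftAt w hw hs := by
    rw [FΛ.G.src_comp _ _ hab] at hs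
    rw [liftComp_of hw hs]
    exact (hf.isLiftAt _ (hact.isVertex_act hw hs) (hab.trans (hact.i_p_act hw hs).symm)).comp
      hpst hact hw hs hab (hg.isLiftAt w hw hs)
  eq_i_of_not w h := if_neg (by rwa [FΛ.G.src_comp _ _ hab] at h)

theorem IsLiftFamily.inv (hpst : IsGpdHomFun FΩ.G FΛ.G pst)
    (hact : CorrespondingAction Ω Λ FΛ p act) {a : FΛ.B} {f : A' → FΩ.B}
    (hf : IsLiftFamily p pst act a f) :
    IsLiftFamily p pst act (FΛ.G.inv a) (liftInv p act a f) where
  isLiftAt w hw hs := by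
    rw [liftInv_of hw hs]
    have hw' := hact.isVertex_act hw hs
    have hs' : FΛ.G.src a = FΛ.i (p (act (FΛ.G.inv a) w)) := by
      rw [hact.i_p_act hw hs, FΛ.G.rng_inv]
    have h := (hf.isLiftAt _ hw' hs').inv hpst hact hw' hs'
    rwa [hact.act_act_inv hw ((FΛ.G.src_inv a).symm.trans hs)] at h
  eq_i_of_not _ h := if_neg h

abbrev LiftArrow (p : A' → A) (pst : FΩ.B → FΛ.B) (act : FΛ.B → A' → A') : Type :=
  {e : FΛ.B × (A' → FΩ.B) // IsLiftFamily p pst act e.1 e.2}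

theorem LiftArrow.ext {x y : LiftArrow p pst act} (h₁ : x.1.1 = y.1.1)
    (h₂ : ∀ w, Ω.IsVertex w → FΛ.G.src y.1.1 = FΛ.i (p w) → x.1.2 w = y.1.2 w) : x = y := by
  refine Subtype.ext (Prod.ext h₁ (funext fun w => ?_))
  by_cases hw : Ω.IsVertex w ∧ FΛ.G.src y.1.1 = FΛ.i (p w)
  · exact h₂ w hw.1 hw.2
  · rw [x.2.eq_i_of_not w (by rwa [h₁]), y.2.eq_i_of_not w hw]

open Classical in
noncomputable def liftGroupoid (hpsti : ∀ a, pst (FΩ.i a) = FΛ.i (p a))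
    (hpst : IsGpdHomFun FΩ.G FΛ.G pst) (hact : CorrespondingAction Ω Λ FΛ p act) :
    GroupoidStruct (LiftArrow p pst act) where
  src e := ⟨(FΛ.G.src e.1.1, FΩ.i), isLiftFamily_i hpsti hact (FΛ.G.src_src _)⟩
  rng e := ⟨(FΛ.G.rng e.1.1, FΩ.i), isLiftFamily_i hpsti hact (FΛ.G.src_rng _)⟩
  comp x y :=
    if h : FΛ.G.src x.1.1 = FΛ.G.rng y.1.1 then
      ⟨(FΛ.G.comp x.1.1 y.1.1, liftComp p act y.1.1 x.1.2 y.1.2), x.2.comp hpst hact h y.2⟩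
    else x
  inv e := ⟨(FΛ.G.inv e.1.1, liftInv p act e.1.1 e.1.2), e.2.inv hpst hact⟩
  src_src _ := Subtype.ext (Prod.ext (FΛ.G.src_src _) rfl)
  rng_src _ := Subtype.ext (Prod.ext (FΛ.G.rng_src _) rfl)
  src_rng _ := Subtype.ext (Prod.ext (FΛ.G.src_rng _) rfl)
  rng_rng _ := Subtype.ext (Prod.ext (FΛ.G.rng_rng _) rfl)
  comp_src_id e := by
    dsimp only
    rw [dif_pos (FΛ.G.rng_src _).symm]
    refine LiftArrow.ext (FΛ.G.comp_src_id _) fun w hw hs => ?_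
    dsimp only
    rw [liftComp_of hw (by rwa [FΛ.G.src_src]), hact.act_eq_self hw hs,
      ← (e.2.isLiftAt w hw hs).1, FΩ.G.comp_src_id]
  rng_comp_id e := by
    dsimp only
    rw [dif_pos (FΛ.G.src_rng _)]
    refine LiftArrow.ext (FΛ.G.rng_comp_id _) fun w hw hs => ?_
    dsimp only
    rw [liftComp_of hw hs, ← (e.2.isLiftAt w hw hs).2.2, FΩ.G.rng_comp_id]
  src_comp x y h := by
    have hab : FΛ.G.src x.1.1 = FΛ.G.rng y.1.1 := congrArg (·.1.1) h
    rw [dif_pos hab]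
    exact Subtype.ext (Prod.ext (FΛ.G.src_comp _ _ hab) rfl)
  rng_comp x y h := by
    have hab : FΛ.G.src x.1.1 = FΛ.G.rng y.1.1 := congrArg (·.1.1) h
    rw [dif_pos hab]
    exact Subtype.ext (Prod.ext (FΛ.G.rng_comp _ _ hab) rfl)
  assoc x y z hxy hyz := by
    have hab : FΛ.G.src x.1.1 = FΛ.G.rng y.1.1 := congrArg (·.1.1) hxy
    have hbc : FΛ.G.src y.1.1 = FΛ.G.rng z.1.1 := congrArg (·.1.1) hyz
    rw [dif_pos hab, dif_pos hbc]
    dsimp only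
    rw [dif_pos (by rw [FΛ.G.src_comp _ _ hab, hbc]),
      dif_pos (by rw [FΛ.G.rng_comp _ _ hbc, hab])]
    refine LiftArrow.ext (FΛ.G.assoc _ _ _ hab hbc) fun w hw hs => ?_
    rw [FΛ.G.src_comp _ _ (by rw [FΛ.G.rng_comp _ _ hbc, hab]), FΛ.G.src_comp _ _ hbc] at hs
    have hw' := hact.isVertex_act hw hs
    have hs' : FΛ.G.src y.1.1 = FΛ.i (p (act z.1.1 w)) := hbc.trans (hact.i_p_act hw hs).symm
    have hy := y.2.isLiftAt _ hw' hs'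
    have hx := x.2.isLiftAt _ (hact.isVertex_act hw' hs')
      (hab.trans (hact.i_p_act hw' hs').symm)
    dsimp only
    rw [liftComp_of hw hs, liftComp_of hw' hs', liftComp_of hw (by rwa [FΛ.G.src_comp _ _ hbc]),
      liftComp_of hw hs, hact.act_comp _ _ w hw hs hbc]
    exact FΩ.G.assoc _ _ _ (hx.1.trans hy.2.2.symm) (hy.1.trans (z.2.isLiftAt w hw hs).2.2.symm)
  src_inv _ := Subtype.ext (Prod.ext (FΛ.G.src_inv _) rfl)
  rng_inv _ := Subtype.ext (Prod.ext (FΛ.G.rng_inv _) rfl)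
  inv_comp_self e := by
    dsimp only
    rw [dif_pos (FΛ.G.src_inv _)]
    refine LiftArrow.ext (FΛ.G.inv_comp_self _) fun w hw hs => ?_
    rw [FΛ.G.src_src] at hs
    have hw' := hact.isVertex_act hw hs
    dsimp only
    rw [liftComp_of hw hs, liftInv_of hw' (by rw [FΛ.G.src_inv, hact.i_p_act hw hs]),
      hact.act_inv_act hw hs, FΩ.G.inv_comp_self, (e.2.isLiftAt w hw hs).1]
  comp_inv_self e := by
    dsimp only
    rw [dif_pos (FΛ.G.rng_inv _).symm]
    refine LiftArrow.ext (FΛ.G.comp_inv_self _) fun w hw hs => ?_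
    rw [FΛ.G.src_rng] at hs
    have hs₁ : FΛ.G.src (FΛ.G.inv e.1.1) = FΛ.i (p w) := (FΛ.G.src_inv _).trans hs
    have hw' := hact.isVertex_act hw hs₁
    have hs' : FΛ.G.src e.1.1 = FΛ.i (p (act (FΛ.G.inv e.1.1) w)) := by
      rw [hact.i_p_act hw hs₁, FΛ.G.rng_inv]
    dsimp only
    rw [liftComp_of hw hs₁, liftInv_of hw hs₁, FΩ.G.comp_inv_self,
      (e.2.isLiftAt _ hw' hs').2.2, hact.act_act_inv hw hs]

theorem liftGroupoid_comp_val (hpsti : ∀ a, pst (FΩ.i a) = FΛ.i (p a))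
    (hpst : IsGpdHomFun FΩ.G FΛ.G pst) (hact : CorrespondingAction Ω Λ FΛ p act)
    {x y : LiftArrow p pst act} (h : FΛ.G.src x.1.1 = FΛ.G.rng y.1.1) :
    ((liftGroupoid hpsti hpst hact).comp x y).1 =
      (FΛ.G.comp x.1.1 y.1.1, liftComp p act y.1.1 x.1.2 y.1.2) := by
  simp only [liftGroupoid, dif_pos h]

theorem isGpdHomFun_liftGroupoid_fst (hpsti : ∀ a, pst (FΩ.i a) = FΛ.i (p a))
    (hpst : IsGpdHomFun FΩ.G FΛ.G pst) (hact : CorrespondingAction Ω Λ FΛ p act) :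
    IsGpdHomFun (liftGroupoid hpsti hpst hact) FΛ.G (fun e => e.1.1) :=
  ⟨fun _ => rfl, fun _ => rfl, fun _ _ h => by
    simp only [liftGroupoid_comp_val hpsti hpst hact (congrArg (·.1.1) h)]⟩

open Classical in
noncomputable def coveringLifts (FΩ : FundamentalGroupoid Ω) (p : A' → A) (μ : A) :
    A' → FΩ.B := fun w =>
  if h : ∃ lam, Ω.src lam = w ∧ p lam = μ then FΩ.i h.choose else FΩ.i w

theorem coveringLifts_src (hp : IsCovering Ω Λ p) (lam : A') :
    coveringLifts FΩ p (p lam) (Ω.src lam) = FΩ.i lam := by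
  have h : ∃ l, Ω.src l = Ω.src lam ∧ p l = p lam := ⟨lam, rfl, rfl⟩
  rw [coveringLifts, dif_pos h, hp.src_inj _ _ h.choose_spec.1 h.choose_spec.2]

theorem IsCovering.exists_src_lift (hp : IsCovering Ω Λ p) {μ : A} {w : A'}
    (hw : Ω.IsVertex w) (h : FΛ.G.src (FΛ.i μ) = FΛ.i (p w)) :
    ∃ lam, Ω.src lam = w ∧ p lam = μ := by
  refine hp.src_lift w hw μ (FΛ.i_injOn_vertices (Λ.src_src μ) (hp.hom.isVertex_map hw) ?_)
  rw [FΛ.i_hom.1, h]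

theorem isLiftFamily_coveringLifts (hp : IsCovering Ω Λ p)
    (hpsti : ∀ a, pst (FΩ.i a) = FΛ.i (p a)) (hact : CorrespondingAction Ω Λ FΛ p act)
    (μ : A) : IsLiftFamily p pst act (FΛ.i μ) (coveringLifts FΩ p μ) where
  isLiftAt w hw hs := by
    obtain ⟨lam, rfl, rfl⟩ := hp.exists_src_lift hw hs
    rw [coveringLifts_src hp]
    exact isLiftAt_i hpsti hact lam
  eq_i_of_not w h := by
    refine dif_neg ?_
    rintro ⟨lam, rfl, rfl⟩
    exact h ⟨Ω.src_src lam, by rw [← FΛ.i_hom.1, ← hp.hom.1]⟩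

noncomputable def liftFunctor (hp : IsCovering Ω Λ p) (hpsti : ∀ a, pst (FΩ.i a) = FΛ.i (p a))
    (hact : CorrespondingAction Ω Λ FΛ p act) (μ : A) : LiftArrow p pst act :=
  ⟨(FΛ.i μ, coveringLifts FΩ p μ), isLiftFamily_coveringLifts hp hpsti hact μ⟩

theorem coveringLifts_of_isVertex (hp : IsCovering Ω Λ p) {v : A} {w : A'} (hv : Λ.IsVertex v)
    (hw : Ω.IsVertex w) (h : FΛ.i v = FΛ.i (p w)) : coveringLifts FΩ p v w = FΩ.i w := by
  have hl := coveringLifts_src (FΩ := FΩ) hp w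
  rwa [hw, ← FΛ.i_injOn_vertices hv (hp.hom.isVertex_map hw) h] at hl

theorem isFunctorToGpdFun_liftFunctor (hp : IsCovering Ω Λ p)
    (hpsti : ∀ a, pst (FΩ.i a) = FΛ.i (p a)) (hpst : IsGpdHomFun FΩ.G FΛ.G pst)
    (hact : CorrespondingAction Ω Λ FΛ p act) :
    IsFunctorToGpdFun Λ (liftGroupoid hpsti hpst hact) (liftFunctor hp hpsti hact) := by
  refine ⟨fun μ => ?_, fun μ => ?_, fun μ ν h => ?_⟩
  · refine LiftArrow.ext (FΛ.i_hom.1 μ)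
      fun w hw (hs : FΛ.G.src (FΛ.G.src (FΛ.i μ)) = _) => ?_
    rw [FΛ.G.src_src, ← FΛ.i_hom.1] at hs
    exact coveringLifts_of_isVertex hp (Λ.src_src μ) hw hs
  · refine LiftArrow.ext (FΛ.i_hom.2.1 μ)
      fun w hw (hs : FΛ.G.src (FΛ.G.rng (FΛ.i μ)) = _) => ?_
    rw [FΛ.G.src_rng, ← FΛ.i_hom.2.1] at hs
    exact coveringLifts_of_isVertex hp (Λ.src_rng μ) hw hs
  · have hg : FΛ.G.src (FΛ.i μ) = FΛ.G.rng (FΛ.i ν) := by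
      rw [← FΛ.i_hom.1, ← FΛ.i_hom.2.1, h]
    have hval := liftGroupoid_comp_val hpsti hpst hact (x := liftFunctor hp hpsti hact μ)
      (y := liftFunctor hp hpsti hact ν) hg
    refine LiftArrow.ext (by simp only [hval]; exact FΛ.i_hom.2.2 μ ν h) fun w hw hs => ?_
    rw [hval] at hs ⊢
    dsimp only [liftFunctor] at hs ⊢
    rw [FΛ.G.src_comp _ _ hg] at hs
    obtain ⟨κ, rfl, rfl⟩ := hp.exists_src_lift hw hs
    obtain ⟨l, hl, rfl⟩ := hp.exists_src_lift (Ω.src_rng κ)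
      (by rw [hg, ← FΛ.i_hom.2.1, ← hp.hom.2.1])
    rw [liftComp_of hw hs, hact.act_cov, ← hl, coveringLifts_src hp, coveringLifts_src hp,
      ← FΩ.i_hom.2.2 l κ hl, ← hp.hom.2.2.1 l κ hl, ← Ω.src_comp l κ hl, coveringLifts_src hp]

def evalLifts (L : FΛ.B → LiftArrow p pst act) (t : ActionArrow Ω FΛ p) : FΩ.B :=
  (L t.1.1).1.2 t.1.2

theorem isLiftAt_evalLifts {L : FΛ.B → LiftArrow p pst act} (hfst : ∀ a, (L a).1.1 = a)
    (t : ActionArrow Ω FΛ p) : IsLiftAt pst act t.1.1 t.1.2 (evalLifts L t) := by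
  have h := (L t.1.1).2.isLiftAt t.1.2 t.2.1 (by rw [hfst]; exact t.2.2)
  rwa [hfst] at h

theorem isGpdHomFun_evalLifts (hpsti : ∀ a, pst (FΩ.i a) = FΛ.i (p a))
    (hpst : IsGpdHomFun FΩ.G FΛ.G pst) (hact : CorrespondingAction Ω Λ FΛ p act)
    {L : FΛ.B → LiftArrow p pst act} (hL : IsGpdHomFun FΛ.G (liftGroupoid hpsti hpst hact) L)
    (hfst : ∀ a, (L a).1.1 = a) :
    IsGpdHomFun (transformationGroupoid hact) FΩ.G (evalLifts L) := by
  refine ⟨fun t => ?_, fun t => ?_, fun t t' h => ?_⟩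
  · show (L (FΛ.G.src t.1.1)).1.2 t.1.2 = _
    rw [hL.1, (isLiftAt_evalLifts hfst t).1]
    rfl
  · show (L (FΛ.G.rng t.1.1)).1.2 (act t.1.1 t.1.2) = _
    rw [hL.2.1, (isLiftAt_evalLifts hfst t).2.2]
    rfl
  · have hab : FΛ.G.src t.1.1 = FΛ.G.rng t'.1.1 := congrArg (·.1.1) h
    have hw : t.1.2 = act t'.1.1 t'.1.2 := congrArg (·.1.2) h
    unfold evalLifts
    rw [transformationGroupoid_comp_val hact hab, hL.2.2 _ _ hab,
      liftGroupoid_comp_val hpsti hpst hact (by rw [hfst, hfst]; exact hab)]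
    dsimp only
    rw [hfst, liftComp_of t'.2.1 t'.2.2, hw]

end Lifts

end Covering

/-- For a covering `p : Ω → Λ`, the map
`(p₊, s) : 𝒢(Ω) → 𝒢(Λ)*Ω⁰`, `c ↦ (p₊(c), s(c))`, is an isomorphism of
groupoids onto the transformation groupoid of the corresponding action of
`𝒢(Λ)` on `Ω⁰`.  The transformation groupoid has arrows
`{(a,w) : w ∈ Ω⁰, s(a) = i(p(w))}` with `s(a,w) = (s(a),w)`,
`r(a,w) = (r(a),aw)` and `(a,bw)(b,w) = (ab,w)`, and the isomorphism is
expressed as a bijection transporting source, range and composition. -/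
theorem fundamental_groupoid_of_covering_iso {k : ℕ} {A A' : Type}
    (Λ : KGraphStruct k A) (Ω : KGraphStruct k A')
    (FΛ : FundamentalGroupoid Λ) (FΩ : FundamentalGroupoid Ω)
    (p : A' → A) (hp : IsCovering Ω Λ p)
    (pst : FΩ.B → FΛ.B) (hpst : IsGpdHomFun FΩ.G FΛ.G pst)
    (hpsti : ∀ a, pst (FΩ.i a) = FΛ.i (p a))
    (act : FΛ.B → A' → A') (hact : CorrespondingAction Ω Λ FΛ p act) :
    ∃ Φ : FΩ.B →
        {q : FΛ.B × A' // Ω.IsVertex q.2 ∧ FΛ.G.src q.1 = FΛ.i (p q.2)},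
      (∀ c, (Φ c).1.1 = pst c) ∧
      (∀ c w, Ω.IsVertex w → FΩ.i w = FΩ.G.src c → (Φ c).1.2 = w) ∧
      Function.Bijective Φ ∧
      (∀ c, (Φ (FΩ.G.src c)).1 = (FΛ.G.src (pst c), (Φ c).1.2)) ∧
      (∀ c, (Φ (FΩ.G.rng c)).1 = (FΛ.G.rng (pst c), act (pst c) (Φ c).1.2)) ∧
      (∀ c c', FΩ.G.src c = FΩ.G.rng c' →
        (Φ (FΩ.G.comp c c')).1 = (FΛ.G.comp (pst c) (pst c'), (Φ c').1.2)) := by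
  obtain ⟨Φ, ⟨hΦ, hΦi⟩, -⟩ := FΩ.univ (transformationGroupoid hact)
    (coveringFunctor FΛ hp.hom) (isFunctorToGpdFun_coveringFunctor hp.hom hact)
  have hfst : ∀ c, (Φ c).1.1 = pst c := congrFun <|
    FΩ.hom_ext ((isGpdHomFun_transformationGroupoid_fst hact).comp hΦ) hpst fun lam => by
      rw [hΦi, hpsti]; rfl
  have hsnd := snd_eq_of_isGpdHomFun hp.hom hact hΦ hΦi
  obtain ⟨L, ⟨hL, hLi⟩, -⟩ := FΛ.univ (liftGroupoid hpsti hpst hact)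
    (liftFunctor hp hpsti hact) (isFunctorToGpdFun_liftFunctor hp hpsti hpst hact)
  have hLfst : ∀ a, (L a).1.1 = a := FΛ.eq_self_of_isGpdHomFun
    ((isGpdHomFun_liftGroupoid_fst hpsti hpst hact).comp hL) fun μ => by
      rw [hLi]; rfl
  have hleft : ∀ c, evalLifts L (Φ c) = c := FΩ.eq_self_of_isGpdHomFun
    ((isGpdHomFun_evalLifts hpsti hpst hact hL hLfst).comp hΦ) fun lam => by
      simp only [evalLifts, hΦi, coveringFunctor, hLi]
      exact coveringLifts_src hp lam
  have hright : ∀ t, Φ (evalLifts L t) = t := fun t =>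
    ActionArrow.ext ((hfst _).trans (isLiftAt_evalLifts hLfst t).2.1)
      (hsnd _ _ t.2.1 (isLiftAt_evalLifts hLfst t).1.symm)
  refine ⟨Φ, hfst, hsnd, Function.bijective_iff_has_inverse.2 ⟨evalLifts L, hleft, hright⟩,
    fun c => ?_, fun c => ?_, fun c c' h => ?_⟩
  · rw [hΦ.1 c, ← hfst c]; rfl
  · rw [hΦ.2.1 c, ← hfst c]; rfl
  · rw [hΦ.2.2 c c' h,
      transformationGroupoid_comp_val hact (congrArg (·.1.1) (hΦ.map_src_eq_rng h)), hfst, hfst]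

end KGraphCovering
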